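/- arXiv:2312.16353 — 5 statements merged into one kernel-verified Lean document; each statement's English description precedes it below -/
import Mathlib

section
/- For any wide triangular partition τ = (τ₁, ..., τ_k) with k ≥ 2, the set D(τ) = {τ_i − τ_{i+1} : 1 ≤ i ≤ k−1} of consecutive part differences equals {d} or {d, d+1} for some d ≥ 1, and the smallest part satisfies τ_k ≤ d + 1. -/
/-!
With `c = r / s`, the parts are `τ j = ⌊r - j c⌋`, so consecutive differences are
`⌊x⌋ - ⌊x - c⌋ ∈ {⌊c⌋, ⌊c⌋ + 1}`, and `⌊c⌋ ≥ 1` for a wide cutting line. Multiplying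
`s - s / r < k + 1` by `c` gives `r - k c < 1 + c`, whence `τ k ≤ ⌊c⌋ + 1`.
-/

/-- The line x/r + y/s = 1 is a cutting line for the partition with parts
`τ 1 ≥ ... ≥ τ k`: each part is given by the floor formula and the number of
parts matches. -/
def IsCuttingLine (r s : ℝ) (k : ℕ) (τ : ℕ → ℕ) : Prop :=
  0 < r ∧ 0 < s ∧
    (∀ j : ℕ, 1 ≤ j → j ≤ k → (τ j : ℤ) = ⌊r - (j : ℝ) * r / s⌋) ∧
    (k : ℤ) = ⌊s - s / r⌋

theorem Int.floor_sub_floor_sub_mem_Icc {R : Type*} [Ring R] [LinearOrder R] [IsStrictOrderedRing R]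
    [FloorRing R] (x c : R) : ⌊x⌋ - ⌊x - c⌋ ∈ Set.Icc ⌊c⌋ (⌊c⌋ + 1) := by
  have hle := Int.le_floor_add (x - c) c
  have hge := Int.le_floor_add_floor (x - c) c
  rw [sub_add_cancel] at hle hge
  constructor <;> omega

theorem Set.exists_eq_singleton_or_eq_pair_succ {s : Set ℕ} {m : ℕ} (hsub : s ⊆ {m, m + 1})
    (hs : s.Nonempty) : ∃ d, m ≤ d ∧ (s = {d} ∨ s = {d, d + 1}) := by
  rcases Set.subset_pair_iff_eq.1 hsub with rfl | h | h | h
  · exact absurd hs Set.not_nonempty_empty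
  · exact ⟨m, le_rfl, Or.inl h⟩
  · exact ⟨m + 1, by omega, Or.inl h⟩
  · exact ⟨m, le_rfl, Or.inr h⟩

namespace IsCuttingLine

variable {r s : ℝ} {k : ℕ} {τ : ℕ → ℕ}

theorem part_eq (h : IsCuttingLine r s k τ) {j : ℕ} (hj : 1 ≤ j) (hjk : j ≤ k) :
    (τ j : ℤ) = ⌊r - j * (r / s)⌋ := by
  rw [h.2.2.1 j hj hjk, mul_div_assoc]

theorem sub_succ_mem_Icc (h : IsCuttingLine r s k τ) {i : ℕ} (hi : 1 ≤ i) (hik : i + 1 ≤ k) :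
    (τ i : ℤ) - τ (i + 1) ∈ Set.Icc ⌊r / s⌋ (⌊r / s⌋ + 1) := by
  have hsucc : r - ((i + 1 : ℕ) : ℝ) * (r / s) = (r - i * (r / s)) - r / s := by
    push_cast; ring
  rw [h.part_eq hi (by omega), h.part_eq (by omega) hik, hsucc]
  exact Int.floor_sub_floor_sub_mem_Icc _ _

theorem last_le (h : IsCuttingLine r s k τ) (hk : 1 ≤ k) : (τ k : ℤ) ≤ ⌊r / s⌋ + 1 := by
  rw [h.part_eq hk le_rfl]
  obtain ⟨hr, hs, -, hkfloor⟩ := h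
  have hlt : s - s / r < k + 1 := by
    have := Int.lt_floor_add_one (s - s / r)
    rwa [← hkfloor, Int.cast_natCast] at this
  have hline : r - k * (r / s) < 1 + r / s := by
    have hmul := mul_lt_mul_of_pos_right hlt (div_pos hr hs)
    have hrs : (s - s / r) * (r / s) = r - 1 := by field_simp
    linarith
  have hfloor : ⌊r - k * (r / s)⌋ < ⌊r / s⌋ + 2 := by
    rw [Int.floor_lt]
    push_cast
    linarith [Int.lt_floor_add_one (r / s)]
  omega

end IsCuttingLine

/-- for a wide triangular partition with k ≥ 2 parts, the set of
consecutive part differences is {d} or {d, d+1} for some d ≥ 1, and the smallest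
part is at most d + 1. -/
theorem stmt12 (k : ℕ) (τ : ℕ → ℕ) (hk : 2 ≤ k)
    (hwide : ∃ r s : ℝ, IsCuttingLine r s k τ ∧ s < r) :
    ∃ d : ℕ, 1 ≤ d ∧
      ({x : ℕ | ∃ i : ℕ, 1 ≤ i ∧ i + 1 ≤ k ∧ x = τ i - τ (i + 1)} = {d} ∨
        {x : ℕ | ∃ i : ℕ, 1 ≤ i ∧ i + 1 ≤ k ∧ x = τ i - τ (i + 1)} = {d, d + 1}) ∧
      τ k ≤ d + 1 := by
  obtain ⟨r, s, hcut, hsr⟩ := hwide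
  have hc : 1 ≤ ⌊r / s⌋ := Int.le_floor.2 (by exact_mod_cast ((one_lt_div hcut.2.1).2 hsr).le)
  obtain ⟨m, hm⟩ : ∃ m : ℕ, ⌊r / s⌋ = m := Int.eq_ofNat_of_zero_le (by omega)
  have hsub : {x : ℕ | ∃ i : ℕ, 1 ≤ i ∧ i + 1 ≤ k ∧ x = τ i - τ (i + 1)} ⊆ {m, m + 1} := by
    rintro _ ⟨i, hi, hik, rfl⟩
    have hdiff := hcut.sub_succ_mem_Icc hi hik
    simp only [Set.mem_Icc, Set.mem_insert_iff, Set.mem_singleton_iff] at hdiff ⊢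
    omega
  obtain ⟨d, hmd, hD⟩ :=
    Set.exists_eq_singleton_or_eq_pair_succ hsub ⟨τ 1 - τ 2, 1, le_rfl, hk, rfl⟩
  have hlast := hcut.last_le (by omega)
  exact ⟨d, by omega, hD, by omega⟩
end

section
/- The map χ = (min, dif, wrd) is a bijection from the set of wide triangular partitions with at least two parts onto the set of triples (m, d, w) with m, d positive integers, w a balanced binary word containing at least one zero, m ≤ d + 1, and additionally w1 balanced with at least one zero whenever m = d + 1. Its inverse is ξ(m, d, w₁...w_{k−1}) = (τ₁,...,τ_k) with τ_i = m + Σ_{j=i}^{k−1} (w_j + d). -/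
/-- The list `L = [τ₁, ..., τ_k]` is a triangular partition cut off by a line
x/r + y/s = 1 with the extra requirement r > s (a "wide" cutting line). -/
def IsWideList (L : List ℕ) : Prop :=
  ∃ r s : ℝ, 0 < r ∧ 0 < s ∧ s < r ∧
    (∀ j : Fin L.length, (L.get j : ℤ) = ⌊r - (((j : ℕ) : ℝ) + 1) * r / s⌋) ∧
    (L.length : ℤ) = ⌊s - s / r⌋

/-- A binary word (list over {0,1}) is balanced: any two factors of equal length
have numbers of ones differing by at most 1. -/
def IsBalanced (w : List ℕ) : Prop :=
  (∀ x ∈ w, x ≤ 1) ∧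
    ∀ i j h : ℕ, i + h ≤ w.length → j + h ≤ w.length →
      |(((w.drop i).take h).sum : ℤ) - (((w.drop j).take h).sum : ℤ)| ≤ 1

/-- Consecutive differences [τ₁−τ₂, ..., τ_{k−1}−τ_k]. -/
def diffsL (L : List ℕ) : List ℕ := List.zipWith (fun a b => a - b) L L.tail

/-- dif(τ): the minimum consecutive part difference. -/
def difL (L : List ℕ) : ℕ := (diffsL L).foldr min L.headI

/-- wrd(τ): the binary word with letters τ_i − τ_{i+1} − dif(τ). -/
def wrdL (L : List ℕ) : List ℕ := (diffsL L).map (fun x => x - difL L)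

/-- χ(τ) = (min τ, dif τ, wrd τ). -/
def chi (L : List ℕ) : ℕ × ℕ × List ℕ := (L.getLastD 0, difL L, wrdL L)

/-- ξ(m, d, w₁...w_{k−1}) = (τ₁, ..., τ_k) with τ_i = m + Σ_{j=i}^{k−1} (w_j + d). -/
def xi (m d : ℕ) : List ℕ → List ℕ
  | [] => [m]
  | a :: t => (a + d + (xi m d t).headI) :: xi m d t

/-- The domain of χ: wide triangular partitions with at least two parts. -/
def chiDom : Set (List ℕ) := {L | IsWideList L ∧ 2 ≤ L.length}

/-- The target of χ: triples (m, d, w) of positive integers m, d and a balanced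
word w containing a zero, with m ≤ d + 1, and w1 balanced with a zero if m = d + 1. -/
def chiTarget : Set (ℕ × ℕ × List ℕ) :=
  {p | 1 ≤ p.1 ∧ 1 ≤ p.2.1 ∧ IsBalanced p.2.2 ∧ 0 ∈ p.2.2 ∧ p.1 ≤ p.2.1 + 1 ∧
    (p.1 = p.2.1 + 1 → IsBalanced (p.2.2 ++ [1]) ∧ 0 ∈ p.2.2 ++ [1])}

/-!
A wide partition cut off by `x/r + y/s = 1` has parts `τ_j = ⌊r - jα⌋` with `α = r/s > 1`, so its
consecutive differences are `⌊α⌋` or `⌊α⌋ + 1` and `wrd τ` is the mechanical word of slope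
`α - dif τ`, hence balanced; `1 ≤ min τ ≤ dif τ + 1` comes from `⌊r - kα⌋ ≥ 1 > ⌊r - (k+1)α⌋`,
and when `min τ = dif τ + 1` the next value `⌊r - (k+1)α⌋` is `0`, which appends the letter `1`.
Conversely a balanced word is mechanical: for windows of length `h` with `g` ones the intervals
`((g - 1)/h, (g + 1)/h)` meet pairwise, by a Euclid-type induction, so some slope `β > 0` lies in
all of them and the prefix sums are `-⌊c - iβ⌋` for a suitable `c`; then `ξ(m, d, w)` is cut off
by a line of slope `d + β`. A decreasing list is recovered from its last part and its differences,
so `ξ` and `χ` are mutually inverse.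
-/

lemma Int.floor_add_sub_floor_mem_Icc {R : Type*} [Ring R] [LinearOrder R] [FloorRing R]
    [IsOrderedRing R] (x y : R) : ⌊x + y⌋ - ⌊x⌋ ∈ Set.Icc ⌊y⌋ (⌊y⌋ + 1) := by
  have := Int.le_floor_add x y
  have := Int.le_floor_add_floor x y
  constructor <;> linarith

def prefixSum (w : List ℕ) (i : ℕ) : ℤ := ((w.take i).sum : ℤ)

lemma sum_take_drop_eq_prefixSum_sub (w : List ℕ) (i h : ℕ) :
    (((w.drop i).take h).sum : ℤ) = prefixSum w (i + h) - prefixSum w i := by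
  simp [prefixSum, List.take_add]

lemma prefixSum_le_prefixSum_add (w : List ℕ) (i h : ℕ) :
    prefixSum w i ≤ prefixSum w (i + h) := by
  have := sum_take_drop_eq_prefixSum_sub w i h
  omega

lemma prefixSum_add_one (w : List ℕ) {i : ℕ} (hi : i < w.length) :
    prefixSum w (i + 1) = prefixSum w i + w[i] := by
  simp [prefixSum, List.sum_take_succ w i hi]

lemma sum_drop_eq_prefixSum_sub (w : List ℕ) (j : ℕ) :
    ((w.drop j).sum : ℤ) = prefixSum w w.length - prefixSum w j := by
  have := List.sum_take_add_sum_drop w j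
  simp only [prefixSum, List.take_length]
  omega

lemma prefixSum_eq_of_getElem_eq_sub {w : List ℕ} {g : ℕ → ℤ}
    (hg : ∀ j (hj : j < w.length), (w[j] : ℤ) = g j - g (j + 1)) :
    ∀ i ≤ w.length, prefixSum w i = g 0 - g i
  | 0, _ => by simp [prefixSum]
  | i + 1, hi => by
    rw [prefixSum_add_one w hi, prefixSum_eq_of_getElem_eq_sub hg i (Nat.le_of_lt hi), hg i hi]
    ring

lemma IsBalanced.window_le {w : List ℕ} (hb : IsBalanced w) {i j h : ℕ}
    (hi : i + h ≤ w.length) (hj : j + h ≤ w.length) :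
    prefixSum w (i + h) - prefixSum w i ≤ prefixSum w (j + h) - prefixSum w j + 1 := by
  have := (abs_le.mp (hb.2 i j h hi hj)).2
  rw [sum_take_drop_eq_prefixSum_sub, sum_take_drop_eq_prefixSum_sub] at this
  linarith

/-- Split the longer window at the length of the shorter one and recurse, as in Euclid's
algorithm. -/
theorem IsBalanced.mul_window_sub_mul_window_le {w : List ℕ} (hb : IsBalanced w) :
    ∀ {i₁ h₁ i₂ h₂ : ℕ}, 0 < h₁ → 0 < h₂ → i₁ + h₁ ≤ w.length → i₂ + h₂ ≤ w.length →
      (h₁ : ℤ) * (prefixSum w (i₂ + h₂) - prefixSum w i₂)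
        - h₂ * (prefixSum w (i₁ + h₁) - prefixSum w i₁) ≤ h₁ + h₂ - 1
  | i₁, h₁, i₂, h₂, hp₁, hp₂, hw₁, hw₂ => by
    rcases lt_trichotomy h₁ h₂ with hlt | rfl | hgt
    · obtain ⟨e, rfl⟩ := Nat.exists_eq_add_of_lt hlt
      have hsplit := hb.window_le (i := i₂ + (e + 1)) (j := i₁) (h := h₁) (by omega) hw₁
      have hrec := hb.mul_window_sub_mul_window_le hp₁ (Nat.succ_pos e) hw₁ (i₂ := i₂) (by omega)
      rw [show i₂ + (e + 1) + h₁ = i₂ + (h₁ + e + 1) by omega] at hsplit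
      push_cast at hrec ⊢
      nlinarith
    · have := hb.window_le hw₂ hw₁
      nlinarith
    · obtain ⟨e, rfl⟩ := Nat.exists_eq_add_of_lt hgt
      have hsplit := hb.window_le (i := i₂) (j := i₁ + (e + 1)) (h := h₂) hw₂ (by omega)
      have hrec := hb.mul_window_sub_mul_window_le (i₁ := i₁) (Nat.succ_pos e) hp₂ (by omega) hw₂
      rw [show i₁ + (e + 1) + h₂ = i₁ + (h₂ + e + 1) by omega] at hsplit
      push_cast at hrec ⊢
      nlinarith
  termination_by _ h₁ _ h₂ => h₁ + h₂

theorem IsBalanced.exists_slope {w : List ℕ} (hb : IsBalanced w) :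
    ∃ β : ℝ, 0 < β ∧ ∀ i h : ℕ, i + h ≤ w.length →
      |h * β - (prefixSum w (i + h) - prefixSum w i)| < 1 := by
  let windows := ((Finset.range (w.length + 1)) ×ˢ (Finset.range (w.length + 1))).filter
    fun p : ℕ × ℕ => 0 < p.2 ∧ p.1 + p.2 ≤ w.length
  have mem_windows {p : ℕ × ℕ} : p ∈ windows ↔ 0 < p.2 ∧ p.1 + p.2 ≤ w.length := by
    simp only [windows, Finset.mem_filter, Finset.mem_product, Finset.mem_range]
    omega
  let ones (p : ℕ × ℕ) : ℝ := (prefixSum w (p.1 + p.2) - prefixSum w p.1 : ℤ)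
  -- `β` must lie in every interval `(lo p, hi p)`; they meet pairwise by the window inequality.
  let lo (p : ℕ × ℕ) : ℝ := (ones p - 1) / p.2
  let hi (p : ℕ × ℕ) : ℝ := (ones p + 1) / p.2
  have lo_lt_hi : ∀ p ∈ windows, ∀ q ∈ windows, lo p < hi q := by
    intro p hp q hq
    obtain ⟨hp₀, hp⟩ := mem_windows.1 hp
    obtain ⟨hq₀, hq⟩ := mem_windows.1 hq
    rw [div_lt_div_iff₀ (by exact_mod_cast hp₀) (by exact_mod_cast hq₀)]
    have := hb.mul_window_sub_mul_window_le hq₀ hp₀ hq hp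
    have : (q.2 : ℝ) * ones p - p.2 * ones q ≤ q.2 + p.2 - 1 := by
      simp only [ones]; exact_mod_cast this
    linarith
  have zero_lt_hi : ∀ q ∈ windows, 0 < hi q := by
    intro q hq
    have : (0 : ℝ) ≤ ones q := by
      simp only [ones]; exact_mod_cast sub_nonneg.2 (prefixSum_le_prefixSum_add w q.1 q.2)
    have : (0 : ℝ) < q.2 := by exact_mod_cast (mem_windows.1 hq).1
    positivity
  obtain ⟨β, hlo, hhi⟩ := Finset.exists_between' (insert 0 (windows.image lo))
    (windows.image hi) (by
      simp only [Finset.forall_mem_insert, Finset.forall_mem_image]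
      exact ⟨zero_lt_hi, lo_lt_hi⟩)
  simp only [Finset.forall_mem_insert, Finset.forall_mem_image] at hlo hhi
  refine ⟨β, hlo.1, fun i h hih => ?_⟩
  rcases Nat.eq_zero_or_pos h with rfl | hh
  · simp
  have hh' : (0 : ℝ) < h := by exact_mod_cast hh
  have hlo : lo (i, h) < β := hlo.2 (mem_windows.2 ⟨hh, hih⟩)
  have hhi : β < hi (i, h) := hhi (mem_windows.2 ⟨hh, hih⟩)
  simp only [lo, hi, ones] at hlo hhi
  rw [div_lt_iff₀ hh'] at hlo
  rw [lt_div_iff₀ hh'] at hhi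
  push_cast at hlo hhi
  rw [abs_lt]
  constructor <;> linarith

theorem IsBalanced.exists_prefixSum_eq_neg_floor {w : List ℕ} (hb : IsBalanced w) :
    ∃ β c : ℝ, 0 < β ∧ ∀ i ≤ w.length, prefixSum w i = -⌊c - i * β⌋ := by
  obtain ⟨β, hβ, hslope⟩ := hb.exists_slope
  let f (i : ℕ) : ℝ := i * β - prefixSum w i
  have hf : ∀ i ≤ w.length, ∀ j ≤ w.length, f j < f i + 1 := by
    intro i hi j hj
    rcases le_total i j with hij | hji
    · obtain ⟨h, rfl⟩ := Nat.exists_eq_add_of_le hij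
      have := (abs_lt.1 (hslope i h hj)).2
      simp only [f]; push_cast at this ⊢; linarith
    · obtain ⟨h, rfl⟩ := Nat.exists_eq_add_of_le hji
      have := (abs_lt.1 (hslope j h hi)).1
      simp only [f]; push_cast at this ⊢; linarith
  -- The values of `f` lie within `1` of each other, so their maximum is a valid intercept.
  obtain ⟨imax, himax, hmax⟩ :=
    (Finset.range (w.length + 1)).exists_max_image f ⟨0, by simp⟩
  simp only [Finset.mem_range, Nat.lt_succ_iff] at himax hmax
  refine ⟨β, f imax, hβ, fun i hi => ?_⟩
  have hle := hmax i hi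
  have hlt := hf i hi imax himax
  have : ⌊f imax - i * β⌋ = -prefixSum w i := by
    rw [Int.floor_eq_iff]
    simp only [f] at hle hlt ⊢
    push_cast
    constructor <;> linarith
  omega

theorem isBalanced_of_getElem_eq_floor_sub_floor {w : List ℕ} {β c : ℝ}
    (hle : ∀ x ∈ w, x ≤ 1)
    (hw : ∀ j (hj : j < w.length), (w[j] : ℤ) = ⌊c - j * β⌋ - ⌊c - (j + 1) * β⌋) :
    IsBalanced w := by
  have hsum : ∀ i ≤ w.length, prefixSum w i = ⌊c⌋ - ⌊c - i * β⌋ := by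
    simpa using prefixSum_eq_of_getElem_eq_sub (g := fun j => ⌊c - j * β⌋) (by simpa using hw)
  have hwindow : ∀ i h, i + h ≤ w.length →
      ⌊h * β⌋ ≤ prefixSum w (i + h) - prefixSum w i ∧
        prefixSum w (i + h) - prefixSum w i ≤ ⌊h * β⌋ + 1 := by
    intro i h hih
    have e : c - i * β = (c - ↑(i + h) * β) + h * β := by push_cast; ring
    have := Int.floor_add_sub_floor_mem_Icc (c - ↑(i + h) * β) (h * β)
    rw [hsum i (by omega), hsum (i + h) hih, e]
    exact ⟨by linarith [this.1], by linarith [this.2]⟩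
  refine ⟨hle, fun i j h hi hj => ?_⟩
  rw [sum_take_drop_eq_prefixSum_sub, sum_take_drop_eq_prefixSum_sub, abs_le]
  have := hwindow i h hi
  have := hwindow j h hj
  constructor <;> linarith

section FoldrMin

variable {α : Type*} [LinearOrder α]

lemma List.foldr_min_le_of_mem {l : List α} (b : α) {x : α} (hx : x ∈ l) : l.foldr min b ≤ x := by
  induction l with
  | nil => simp at hx
  | cons a t ih =>
    rcases List.mem_cons.1 hx with rfl | hx
    · exact min_le_left _ _
    · exact (min_le_right _ _).trans (ih hx)

lemma List.le_foldr_min {l : List α} {a b : α} (hl : ∀ x ∈ l, a ≤ x) (hb : a ≤ b) :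
    a ≤ l.foldr min b := by
  induction l with
  | nil => exact hb
  | cons x t ih => exact le_min (hl x (by simp)) (ih fun y hy => hl y (by simp [hy]))

lemma List.foldr_min_mem {l : List α} {b : α} (hne : l ≠ []) (hl : ∀ x ∈ l, x ≤ b) :
    l.foldr min b ∈ l := by
  induction l with
  | nil => exact absurd rfl hne
  | cons a t ih =>
    rcases eq_or_ne t [] with rfl | ht
    · simp [hl a (by simp)]
    · rcases min_choice a (t.foldr min b) with h | h <;> simp only [List.foldr_cons, h]
      · simp
      · exact List.mem_cons_of_mem a (ih ht fun x hx => hl x (by simp [hx]))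

end FoldrMin

lemma length_xi (m d : ℕ) (w : List ℕ) : (xi m d w).length = w.length + 1 := by
  induction w with
  | nil => rfl
  | cons a t ih => simp [xi, ih]

lemma headI_xi (m d : ℕ) (w : List ℕ) : (xi m d w).headI = m + w.sum + w.length * d := by
  induction w with
  | nil => simp [xi]
  | cons a t ih => simp only [xi, List.headI_cons, ih, List.sum_cons, List.length_cons]; ring

lemma getLastD_xi (m d : ℕ) (w : List ℕ) : (xi m d w).getLastD 0 = m := by
  induction w with
  | nil => rfl
  | cons a t ih =>
    obtain ⟨b, u, hbu⟩ : ∃ b u, xi m d t = b :: u := List.exists_cons_of_ne_nil (by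
      rw [← List.length_pos_iff, length_xi]; omega)
    simpa [xi, hbu] using ih

lemma getElem_xi (m d : ℕ) (w : List ℕ) {j : ℕ} (hj : j ≤ w.length) :
    (xi m d w)[j]'(by rw [length_xi]; omega) = m + (w.drop j).sum + (w.length - j) * d := by
  induction w generalizing j with
  | nil => simp_all [xi]
  | cons a t ih =>
    cases j with
    | zero => simpa [xi] using headI_xi m d (a :: t)
    | succ j => simpa [xi] using ih (by simpa using hj)

lemma diffsL_xi (m d : ℕ) (w : List ℕ) : diffsL (xi m d w) = w.map (· + d) := by
  induction w with
  | nil => rfl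
  | cons a t ih =>
    obtain ⟨b, u, hbu⟩ : ∃ b u, xi m d t = b :: u := List.exists_cons_of_ne_nil (by
      rw [← List.length_pos_iff, length_xi]; omega)
    rw [hbu] at ih
    simpa [xi, hbu, diffsL] using ih

lemma difL_xi (m d : ℕ) {w : List ℕ} (h0 : 0 ∈ w) : difL (xi m d w) = d := by
  have hlen : 1 ≤ w.length := List.length_pos_of_mem h0
  rw [difL, diffsL_xi]
  refine le_antisymm (List.foldr_min_le_of_mem _ (List.mem_map.2 ⟨0, h0, zero_add d⟩)) ?_
  refine List.le_foldr_min (by simp) ?_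
  rw [headI_xi]
  have := Nat.le_mul_of_pos_left d hlen
  omega

lemma chi_xi (m d : ℕ) {w : List ℕ} (h0 : 0 ∈ w) : chi (xi m d w) = (m, d, w) := by
  rw [chi, getLastD_xi, wrdL, difL_xi m d h0, diffsL_xi, List.map_map]
  simp [Function.comp_def]

lemma length_diffsL (L : List ℕ) : (diffsL L).length = L.length - 1 := by
  simp [diffsL]

lemma getElem_diffsL (L : List ℕ) {i : ℕ} (hi : i + 1 < L.length) :
    (diffsL L)[i]'(by rw [length_diffsL]; omega) = L[i] - L[i + 1] := by
  simp [diffsL]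

lemma xi_getLastD_map_sub_diffsL {d : ℕ} :
    ∀ {L : List ℕ}, L ≠ [] → L.IsChain (fun a b => b + d ≤ a) →
      xi (L.getLastD 0) d ((diffsL L).map (· - d)) = L
  | [x], _, _ => rfl
  | x :: y :: u, _, hL => by
    rw [List.isChain_cons_cons] at hL
    have ih := xi_getLastD_map_sub_diffsL (L := y :: u) (by simp) hL.2
    simp only [diffsL, List.tail_cons, List.zipWith_cons_cons, List.map_cons] at ih ⊢
    have hlast : (x :: y :: u).getLastD 0 = (y :: u).getLastD 0 := by
      simp [List.getLastD_eq_getLast?]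
    rw [xi, hlast, ih, List.headI_cons]
    congr 1
    omega

lemma difL_le_of_mem {L : List ℕ} {x : ℕ} (hx : x ∈ diffsL L) : difL L ≤ x :=
  List.foldr_min_le_of_mem _ hx

lemma difL_mem_diffsL {L : List ℕ} (h2 : 2 ≤ L.length) (hL : L.Pairwise (· ≥ ·)) :
    difL L ∈ diffsL L := by
  obtain ⟨a, t, rfl⟩ := List.exists_cons_of_length_pos (by omega : 0 < L.length)
  refine List.foldr_min_mem (by rw [← List.length_pos_iff, length_diffsL]; simp at h2 ⊢; omega)
    fun x hx => ?_
  obtain ⟨i, hi, rfl⟩ := List.mem_iff_getElem.1 hx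
  rw [length_diffsL] at hi
  rw [getElem_diffsL _ (by omega)]
  refine (Nat.sub_le _ _).trans ?_
  rcases i with _ | i
  · exact le_rfl
  · exact List.rel_of_pairwise_cons hL (List.getElem_mem _)

lemma zero_mem_wrdL {L : List ℕ} (h2 : 2 ≤ L.length) (hL : L.Pairwise (· ≥ ·)) : 0 ∈ wrdL L :=
  List.mem_map.2 ⟨_, difL_mem_diffsL h2 hL, Nat.sub_self _⟩

lemma floor_sub_mul_sub_natCast (r α : ℝ) (d i : ℕ) :
    ⌊(r - α) - i * (α - d)⌋ = ⌊r - (i + 1) * α⌋ + (i * d : ℕ) := by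
  rw [← Int.floor_add_natCast]
  push_cast
  ring_nf

/-- `L = [⌊r - α⌋, ⌊r - 2α⌋, …]`. -/
def IsFloorSeq (r α : ℝ) (L : List ℕ) : Prop :=
  ∀ j (hj : j < L.length), (L[j] : ℤ) = ⌊r - (j + 1) * α⌋

theorem isWideList_iff {L : List ℕ} :
    IsWideList L ↔ ∃ r α : ℝ, 1 < α ∧ IsFloorSeq r α L ∧
      L.length * α + 1 ≤ r ∧ r < (L.length + 1) * α + 1 := by
  have hlen : ∀ r s : ℝ, 0 < r → 0 < s → ((L.length : ℤ) = ⌊s - s / r⌋ ↔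
      L.length * (r / s) + 1 ≤ r ∧ r < (L.length + 1) * (r / s) + 1) := by
    intro r s hr hs
    have e : s - s / r = (r - 1) / (r / s) := by field_simp
    rw [eq_comm, Int.floor_eq_iff, e, le_div_iff₀ (by positivity), div_lt_iff₀ (by positivity)]
    push_cast
    constructor <;> rintro ⟨h₁, h₂⟩ <;> constructor <;> linarith
  constructor
  · rintro ⟨r, s, hr, hs, hsr, hL, hk⟩
    refine ⟨r, r / s, (one_lt_div hs).2 hsr, fun j hj => ?_, (hlen r s hr hs).1 hk⟩
    simpa [mul_div_assoc] using hL ⟨j, hj⟩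
  · rintro ⟨r, α, hα, hL, hk⟩
    have hr : 0 < r := by nlinarith
    have hrs : r / (r / α) = α := by field_simp
    refine ⟨r, r / α, hr, by positivity, div_lt_self hr hα, fun j => ?_, ?_⟩
    · simpa [mul_div_assoc, hrs] using hL j j.2
    · rwa [hlen r _ hr (by positivity), hrs]

namespace IsFloorSeq

variable {L : List ℕ} {r α : ℝ}

lemma sub_getElem_mem_Icc (hL : IsFloorSeq r α L) {i : ℕ} (hi : i + 1 < L.length) :
    (L[i] : ℤ) - L[i + 1] ∈ Set.Icc ⌊α⌋ (⌊α⌋ + 1) := by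
  rw [hL i (by omega), hL (i + 1) hi]
  convert Int.floor_add_sub_floor_mem_Icc (r - (↑(i + 1) + 1) * α) α using 3
  push_cast
  ring

lemma isChain_ge (hL : IsFloorSeq r α L) (hα : 0 ≤ α) : L.IsChain (· ≥ ·) :=
  List.isChain_iff_getElem.2 fun i hi => by
    have := (hL.sub_getElem_mem_Icc hi).1
    have := Int.floor_nonneg.2 hα
    omega

lemma cast_mem_Icc_of_mem_diffsL (hL : IsFloorSeq r α L) (hα : 0 ≤ α) {x : ℕ}
    (hx : x ∈ diffsL L) : (x : ℤ) ∈ Set.Icc ⌊α⌋ (⌊α⌋ + 1) := by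
  obtain ⟨i, hi, rfl⟩ := List.mem_iff_getElem.1 hx
  rw [length_diffsL] at hi
  obtain ⟨h₁, h₂⟩ := hL.sub_getElem_mem_Icc (i := i) (by omega)
  have := Int.floor_nonneg.2 hα
  rw [getElem_diffsL _ (by omega)]
  constructor <;> omega

lemma difL_mem_Icc (hL : IsFloorSeq r α L) (hα : 0 ≤ α) (h2 : 2 ≤ L.length) :
    (difL L : ℤ) ∈ Set.Icc ⌊α⌋ (⌊α⌋ + 1) :=
  hL.cast_mem_Icc_of_mem_diffsL hα (difL_mem_diffsL h2 (hL.isChain_ge hα).pairwise)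

lemma getLastD_eq_floor (hL : IsFloorSeq r α L) (h1 : 1 ≤ L.length) :
    (L.getLastD 0 : ℤ) = ⌊r - L.length * α⌋ := by
  have := hL (L.length - 1) (by omega)
  rw [Nat.cast_sub h1] at this
  simpa [List.getLast?_eq_getElem?, show 0 < L.length by omega] using this

lemma getElem_wrdL (hL : IsFloorSeq r α L) (hα : 0 ≤ α) {i : ℕ} (hi : i < (wrdL L).length) :
    ((wrdL L)[i] : ℤ) =
      ⌊(r - α) - i * (α - difL L)⌋ - ⌊(r - α) - (i + 1) * (α - difL L)⌋ := by
  have hi' : i + 1 < L.length := by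
    rw [wrdL, List.length_map, length_diffsL] at hi; omega
  have hdi : difL L ≤ (diffsL L)[i]'(by rw [length_diffsL]; omega) :=
    difL_le_of_mem (List.getElem_mem _)
  rw [getElem_diffsL _ hi'] at hdi
  have hmono := (hL.isChain_ge hα).getElem i hi'
  have hnext := hL (i + 1) hi'
  have hshift := floor_sub_mul_sub_natCast r α (difL L) (i + 1)
  push_cast at hnext hshift
  simp only [wrdL, List.getElem_map, getElem_diffsL _ hi', floor_sub_mul_sub_natCast, hshift]
  rw [← hL i (by omega), ← hnext]
  have : ((L[i] - L[i + 1] - difL L : ℕ) : ℤ) = L[i] - L[i + 1] - difL L := by omega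
  rw [this]
  push_cast
  ring

lemma wrdL_le_one (hL : IsFloorSeq r α L) (hα : 0 ≤ α) (h2 : 2 ≤ L.length) :
    ∀ x ∈ wrdL L, x ≤ 1 := by
  intro x hx
  obtain ⟨y, hy, rfl⟩ := List.mem_map.1 hx
  have := (hL.cast_mem_Icc_of_mem_diffsL hα hy).2
  have := (hL.difL_mem_Icc hα h2).1
  omega

lemma isBalanced_wrdL (hL : IsFloorSeq r α L) (hα : 0 ≤ α) (h2 : 2 ≤ L.length) :
    IsBalanced (wrdL L) :=
  isBalanced_of_getElem_eq_floor_sub_floor (hL.wrdL_le_one hα h2) fun _ hj => hL.getElem_wrdL hα hj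

/-- Appending the letter `1` to `wrd L` amounts to appending the part `⌊r - (k + 1) α⌋ = 0`
to `L`, which keeps it a sequence of floors along the same line. -/
lemma isBalanced_wrdL_append_one (hL : IsFloorSeq r α L) (hα : 0 ≤ α) (h2 : 2 ≤ L.length)
    (hlast : ⌊r - L.length * α⌋ = difL L + 1) (hnext : ⌊r - (L.length + 1) * α⌋ = 0) :
    IsBalanced (wrdL L ++ [1]) := by
  refine isBalanced_of_getElem_eq_floor_sub_floor (β := α - difL L) (c := r - α) ?_ fun j hj => ?_
  · simp only [List.mem_append, List.mem_singleton]
    rintro x (hx | rfl)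
    exacts [hL.wrdL_le_one hα h2 x hx, le_rfl]
  rcases lt_or_eq_of_le (Nat.le_of_lt_succ (by simpa using hj)) with hj | rfl
  · rw [List.getElem_append_left hj]
    exact hL.getElem_wrdL hα hj
  have hk : ((wrdL L).length : ℝ) + 1 = L.length := by
    have : (wrdL L).length + 1 = L.length := by rw [wrdL, List.length_map, length_diffsL]; omega
    exact_mod_cast this
  have h₁ := floor_sub_mul_sub_natCast r α (difL L) (wrdL L).length
  have h₂ := floor_sub_mul_sub_natCast r α (difL L) ((wrdL L).length + 1)
  push_cast at h₁ h₂
  rw [hk] at h₁ h₂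
  rw [List.getElem_append_right le_rfl, hk, h₁, h₂, hlast, hnext]
  simp
  ring

end IsFloorSeq

theorem xi_chi {L : List ℕ} (hL : L ∈ chiDom) : xi (chi L).1 (chi L).2.1 (chi L).2.2 = L := by
  obtain ⟨hwide, h2⟩ := hL
  obtain ⟨r, α, hα, hL, -⟩ := isWideList_iff.1 hwide
  show xi (L.getLastD 0) (difL L) ((diffsL L).map (· - difL L)) = L
  refine xi_getLastD_map_sub_diffsL (List.ne_nil_of_length_pos (by omega))
    (List.isChain_iff_getElem.2 fun i hi => ?_)
  have hle := difL_le_of_mem (List.getElem_mem (l := diffsL L) (n := i)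
    (by rw [length_diffsL]; omega))
  have hge := (hL.isChain_ge (by linarith)).getElem i hi
  rw [getElem_diffsL _ hi] at hle
  omega

theorem chi_mem_chiTarget {L : List ℕ} (hL : L ∈ chiDom) : chi L ∈ chiTarget := by
  simp only [chiTarget, chi, Set.mem_ofPred_eq]
  obtain ⟨hwide, h2⟩ := hL
  obtain ⟨r, α, hα, hL, hlo, hhi⟩ := isWideList_iff.1 hwide
  have hα₀ : 0 ≤ α := by linarith
  have hfloor : 1 ≤ ⌊α⌋ := Int.le_floor.2 (by exact_mod_cast hα.le)
  obtain ⟨hd₁, hd₂⟩ := hL.difL_mem_Icc hα₀ h2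
  have hm := hL.getLastD_eq_floor (by omega)
  have hm₁ : 1 ≤ ⌊r - L.length * α⌋ := Int.le_floor.2 (by push_cast; linarith)
  have hnext : ⌊r - (L.length + 1) * α⌋ < 1 := Int.floor_lt.2 (by push_cast; linarith)
  have hstep := Int.floor_add_sub_floor_mem_Icc (r - (L.length + 1) * α) α
  rw [show r - (L.length + 1) * α + α = r - L.length * α by ring] at hstep
  have h0 := zero_mem_wrdL h2 (hL.isChain_ge hα₀).pairwise
  refine ⟨by omega, by omega, hL.isBalanced_wrdL hα₀ h2, h0, by have := hstep.2; omega,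
    fun hmd => ⟨?_, List.mem_append_left _ h0⟩⟩
  exact hL.isBalanced_wrdL_append_one hα₀ h2 (by omega) (by have := hstep.2; omega)

theorem isWideList_xi {m d : ℕ} {w : List ℕ} {β c : ℝ} (hm : 1 ≤ m) (hd : 1 ≤ d) (hβ : 0 < β)
    (hS : ∀ i ≤ w.length, prefixSum w i = -⌊c - i * β⌋)
    (htop : m + prefixSum w w.length + c - w.length * β < d + β + 1) :
    IsWideList (xi m d w) := by
  have hd' : (1 : ℝ) ≤ d := by exact_mod_cast hd
  -- `r` is chosen so that `r - (j + 1) (d + β) = (m + S n + (n - j) d) + (c - j β)`, whose floor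
  -- is the `j`-th part of `ξ(m, d, w)` because `⌊c - j β⌋ = -S j`.
  refine isWideList_iff.2
    ⟨(w.length + 1) * (d + β) + m + prefixSum w w.length + c - w.length * β, d + β,
      by linarith, fun j hj => ?_, ?_, ?_⟩
  · rw [length_xi] at hj
    have hj' : j ≤ w.length := by omega
    have e : (w.length + 1) * (d + β) + m + prefixSum w w.length + c - w.length * β
        - (j + 1) * (d + β) =
          ((m + prefixSum w w.length + (w.length - j : ℕ) * d : ℤ) : ℝ) + (c - j * β) := by
      push_cast [Nat.cast_sub hj']
      ring
    rw [getElem_xi m d w hj', e, Int.floor_intCast_add, ← neg_eq_iff_eq_neg.2 (hS j hj')]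
    simp only [Nat.cast_add, Nat.cast_mul, sum_drop_eq_prefixSum_sub]
    ring
  · rw [length_xi]
    have hfloor := Int.floor_le (c - w.length * β)
    rw [← neg_eq_iff_eq_neg.2 (hS _ le_rfl)] at hfloor
    have : (1 : ℝ) ≤ m := by exact_mod_cast hm
    push_cast at hfloor ⊢
    linarith
  · rw [length_xi]
    push_cast
    linarith

theorem xi_mem_chiDom {m d : ℕ} {w : List ℕ} (hp : (m, d, w) ∈ chiTarget) : xi m d w ∈ chiDom := by
  obtain ⟨hm, hd, hb, h0, hmd, hext⟩ := hp
  dsimp only at hm hd hb h0 hmd hext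
  refine ⟨?_, by rw [length_xi]; have := List.length_pos_of_mem h0; omega⟩
  rcases hmd.lt_or_eq with hlt | heq
  · obtain ⟨β, c, hβ, hS⟩ := hb.exists_prefixSum_eq_neg_floor
    refine isWideList_xi hm hd hβ hS ?_
    have hfloor := Int.lt_floor_add_one (c - w.length * β)
    rw [← neg_eq_iff_eq_neg.2 (hS _ le_rfl)] at hfloor
    have : (m : ℝ) ≤ d := by exact_mod_cast Nat.lt_succ_iff.1 hlt
    push_cast at hfloor
    linarith
  · obtain ⟨β, c, hβ, hS⟩ := (hext heq).1.exists_prefixSum_eq_neg_floor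
    have hpre : ∀ i ≤ w.length, prefixSum (w ++ [1]) i = prefixSum w i := fun i hi => by
      simp [prefixSum, List.take_append_of_le_length hi]
    refine isWideList_xi hm hd hβ (fun i hi => by rw [← hpre i hi]; exact hS i (by simp; omega)) ?_
    have hlast : ⌊c - (w.length + 1) * β⌋ = -prefixSum w w.length - 1 := by
      have := hS (w.length + 1) (by simp)
      rw [prefixSum_add_one _ (by simp), hpre _ le_rfl, List.getElem_append_right le_rfl] at this
      push_cast at this
      simp only [Nat.sub_self, List.getElem_cons_zero, Nat.cast_one] at this
      omega
    have hfloor := Int.lt_floor_add_one (c - (w.length + 1) * β)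
    rw [hlast] at hfloor
    have : (m : ℝ) = d + 1 := by exact_mod_cast heq
    push_cast at hfloor
    linarith

/-- χ = (min, dif, wrd) is a bijection from wide triangular
partitions with at least two parts onto the set of admissible triples, with
inverse ξ. -/
theorem stmt13 :
    Set.BijOn chi chiDom chiTarget ∧
      Set.InvOn (fun p : ℕ × ℕ × List ℕ => xi p.1 p.2.1 p.2.2) chi chiDom chiTarget := by
  have hinv : Set.InvOn (fun p : ℕ × ℕ × List ℕ => xi p.1 p.2.1 p.2.2) chi chiDom chiTarget :=
    ⟨fun L hL => xi_chi hL, fun ⟨m, d, w⟩ hp => chi_xi m d hp.2.2.2.1⟩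
  exact ⟨hinv.bijOn (fun L hL => chi_mem_chiTarget hL) (fun ⟨m, d, w⟩ hp => xi_mem_chiDom hp), hinv⟩
end

section
/- For every nonempty triangular partition τ with leftmost removable cell c⁻ and rightmost removable cell c⁺ (equal if there is only one removable cell), the number of triangular subpartitions satisfies I(τ) = I(τ \ {c⁻}) + I(τ \ {c⁺}) − I(τ°) + 1, where τ° is τ minus the cells of the diagonal segment between c⁻ and c⁺. -/
/-!
A triangular subpartition of `τ` either equals `τ` or misses `c⁻` or `c⁺`; those missing both
are exactly the subpartitions of `τ°`, since the cells strictly above a line form a convex set.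
Inclusion–exclusion then gives the recurrence.

The first claim rests on two facts. If `ν ⊊ τ` are triangular, sweep a line separating `τ`
towards one separating `ν` until it first meets a cell of `τ`, which lies in `τ \ ν`; rotating it
slightly about a point just left of the rightmost cell met cuts off that cell, so `τ` has a
removable cell outside `ν`. Second, no removable cell `d ≠ c⁻, c⁺` lies between `c⁻` and `c⁺`: after
reflecting `c⁺` or `c⁻` through `d` if necessary, `d` would be dominated by the midpoint of two
cells of `τ \ {d}`, which a line cannot separate from `d`.
-/

open Set

/-- The positive quadrant of lattice points, representing ℕ² in the paper. -/
def posQuad : Set (ℕ × ℕ) := {c | 1 ≤ c.1 ∧ 1 ≤ c.2}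

/-- Embedding of lattice cells into the real plane. -/
noncomputable def toR2 (c : ℕ × ℕ) : ℝ × ℝ := ((c.1 : ℝ), (c.2 : ℝ))

/-- A set of cells is triangular if it consists exactly of the points of ℕ²
lying weakly below some line x/r + y/s = 1 with r, s > 0. -/
def IsTriangularSet (S : Set (ℕ × ℕ)) : Prop :=
  ∃ r s : ℝ, 0 < r ∧ 0 < s ∧
    S = {c : ℕ × ℕ | 1 ≤ c.1 ∧ 1 ≤ c.2 ∧ (c.1 : ℝ) / r + (c.2 : ℝ) / s ≤ 1}

/-- `S` is the Ferrers diagram of an integer partition. -/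
def IsPartitionSet (S : Set (ℕ × ℕ)) : Prop :=
  S.Finite ∧ S ⊆ posQuad ∧
    ∀ c ∈ S, ∀ a b : ℕ, 1 ≤ a → a ≤ c.1 → 1 ≤ b → b ≤ c.2 → (a, b) ∈ S

/-- A cell is removable if deleting it yields a triangular partition. -/
def RemovableCell (S : Set (ℕ × ℕ)) (c : ℕ × ℕ) : Prop :=
  c ∈ S ∧ IsTriangularSet (S \ {c})

/-- A cell of the complement is addable if adjoining it yields a triangular partition. -/
def AddableCell (S : Set (ℕ × ℕ)) (c : ℕ × ℕ) : Prop :=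
  c ∈ posQuad \ S ∧ IsTriangularSet (insert c S)

/-- The number of triangular partitions contained in `S` (including ∅ and `S`). -/
noncomputable def numTriSub (S : Set (ℕ × ℕ)) : ℕ :=
  {ν : Set (ℕ × ℕ) | IsTriangularSet ν ∧ ν ⊆ S}.ncard

open Filter Topology

def linForm (a b : ℝ) (c : ℕ × ℕ) : ℝ := a * c.1 + b * c.2

lemma linForm_pos {a b : ℝ} (ha : 0 < a) (hb : 0 < b) {c : ℕ × ℕ} (hc : c ∈ posQuad) :
    0 < linForm a b c := by
  have h1 : (1 : ℝ) ≤ c.1 := by exact_mod_cast hc.1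
  have h2 : (1 : ℝ) ≤ c.2 := by exact_mod_cast hc.2
  unfold linForm; positivity

lemma finite_linForm_le {a b : ℝ} (ha : 0 < a) (hb : 0 < b) (t : ℝ) :
    {c : ℕ × ℕ | linForm a b c ≤ t}.Finite := by
  refine ((finite_Iic ⌊t / a⌋₊).prod (finite_Iic ⌊t / b⌋₊)).subset fun c hc => ?_
  have h1 : (0 : ℝ) ≤ a * c.1 := by positivity
  have h2 : (0 : ℝ) ≤ b * c.2 := by positivity
  simp only [mem_ofPred_eq, linForm] at hc
  exact ⟨Nat.le_floor ((le_div_iff₀ ha).2 (by linarith)),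
    Nat.le_floor ((le_div_iff₀ hb).2 (by linarith))⟩

lemma isTriangularSet_iff_linForm {S : Set (ℕ × ℕ)} :
    IsTriangularSet S ↔ ∃ a b : ℝ, 0 < a ∧ 0 < b ∧ S = {c ∈ posQuad | linForm a b c ≤ 1} := by
  have key (r s : ℝ) : {c : ℕ × ℕ | 1 ≤ c.1 ∧ 1 ≤ c.2 ∧ (c.1 : ℝ) / r + (c.2 : ℝ) / s ≤ 1} =
      {c ∈ posQuad | linForm r⁻¹ s⁻¹ c ≤ 1} := by
    ext c
    simp only [mem_ofPred_eq, posQuad, linForm, div_eq_inv_mul, and_assoc]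
  constructor
  · rintro ⟨r, s, hr, hs, rfl⟩
    exact ⟨r⁻¹, s⁻¹, inv_pos.2 hr, inv_pos.2 hs, key r s⟩
  · rintro ⟨a, b, ha, hb, rfl⟩
    refine ⟨a⁻¹, b⁻¹, inv_pos.2 ha, inv_pos.2 hb, ?_⟩
    rw [key, inv_inv, inv_inv]

lemma isTriangularSet_linForm_le {a b t : ℝ} (ha : 0 < a) (hb : 0 < b) (ht : 0 < t) :
    IsTriangularSet {c ∈ posQuad | linForm a b c ≤ t} := by
  refine isTriangularSet_iff_linForm.2 ⟨a / t, b / t, div_pos ha ht, div_pos hb ht, ?_⟩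
  ext c
  have : linForm (a / t) (b / t) c = linForm a b c / t := by simp only [linForm]; ring
  simp only [mem_ofPred_eq, this, div_le_one ht]

namespace IsTriangularSet

variable {S : Set (ℕ × ℕ)}

lemma subset_posQuad (hS : IsTriangularSet S) : S ⊆ posQuad := by
  obtain ⟨a, b, -, -, rfl⟩ := isTriangularSet_iff_linForm.1 hS
  exact fun c hc => hc.1

lemma finite (hS : IsTriangularSet S) : S.Finite := by
  obtain ⟨a, b, ha, hb, rfl⟩ := isTriangularSet_iff_linForm.1 hS
  exact (finite_linForm_le ha hb 1).subset fun c hc => hc.2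

lemma mem_of_two_mul_le (hS : IsTriangularSet S) {p q d : ℕ × ℕ} (hp : p ∈ S) (hq : q ∈ S)
    (hd : d ∈ posQuad) (h1 : 2 * d.1 ≤ p.1 + q.1) (h2 : 2 * d.2 ≤ p.2 + q.2) : d ∈ S := by
  obtain ⟨a, b, ha, hb, rfl⟩ := isTriangularSet_iff_linForm.1 hS
  have h1' : 2 * (d.1 : ℝ) ≤ p.1 + q.1 := by exact_mod_cast h1
  have h2' : 2 * (d.2 : ℝ) ≤ p.2 + q.2 := by exact_mod_cast h2
  have hmid : 2 * linForm a b d ≤ linForm a b p + linForm a b q := by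
    simp only [linForm]; nlinarith
  exact ⟨hd, by linarith [hp.2, hq.2]⟩

lemma mem_or_mem_of_add_eq (hS : IsTriangularSet S) {x y z : ℕ × ℕ} (hx : x ∈ S)
    (hy : y ∈ posQuad) (hz : z ∈ posQuad) (h1 : y.1 + z.1 = 2 * x.1) (h2 : y.2 + z.2 = 2 * x.2) :
    y ∈ S ∨ z ∈ S := by
  obtain ⟨a, b, ha, hb, rfl⟩ := isTriangularSet_iff_linForm.1 hS
  have h1' : (y.1 : ℝ) + z.1 = 2 * x.1 := by exact_mod_cast h1
  have h2' : (y.2 : ℝ) + z.2 = 2 * x.2 := by exact_mod_cast h2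
  have hsum : linForm a b y + linForm a b z = 2 * linForm a b x := by
    simp only [linForm]; linear_combination a * h1' + b * h2'
  by_contra! h
  have hy' : 1 < linForm a b y := not_le.1 fun hle => h.1 ⟨hy, hle⟩
  have hz' : 1 < linForm a b z := not_le.1 fun hle => h.2 ⟨hz, hle⟩
  linarith [hx.2]

lemma notMem_of_mem_segment (hS : IsTriangularSet S) {p q c : ℕ × ℕ}
    (hp : p ∈ posQuad \ S) (hq : q ∈ posQuad \ S) (hc : toR2 c ∈ segment ℝ (toR2 p) (toR2 q)) :
    c ∉ S := by
  obtain ⟨a, b, ha, hb, rfl⟩ := isTriangularSet_iff_linForm.1 hS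
  let H : Set (ℝ × ℝ) := {w | 1 < a * w.1 + b * w.2}
  have hH : Convex ℝ H := convex_halfSpace_gt
    ⟨fun v w => by simp only [Prod.fst_add, Prod.snd_add]; ring,
     fun r v => by simp only [Prod.smul_fst, Prod.smul_snd, smul_eq_mul]; ring⟩ 1
  have hout {e : ℕ × ℕ} (he : e ∈ posQuad \ {c ∈ posQuad | linForm a b c ≤ 1}) : toR2 e ∈ H := by
    simpa [H, toR2, linForm, he.1] using he.2
  have hcH : toR2 c ∈ H := hH.segment_subset (hout hp) (hout hq) hc
  exact fun hcS => (not_lt.2 hcS.2) hcH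

end IsTriangularSet

namespace RemovableCell

variable {S : Set (ℕ × ℕ)} {d e : ℕ × ℕ}

lemma not_le (hS : IsTriangularSet S) (hd : RemovableCell S d) (he : e ∈ S) (hed : e ≠ d) :
    ¬d ≤ e := fun ⟨h1, h2⟩ =>
  (hd.2.mem_of_two_mul_le ⟨he, hed⟩ ⟨he, hed⟩ (hS.subset_posQuad hd.1) (by omega) (by omega)).2 rfl

/-- The reflection would lie in `S \ {e}`, making `d` the midpoint of two cells of `S \ {d}`. -/
lemma reflect_notMem_posQuad (hS : IsTriangularSet S) (hd : RemovableCell S d)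
    (he : RemovableCell S e) (hed : e ≠ d) (h1 : e.1 ≤ 2 * d.1) (h2 : e.2 ≤ 2 * d.2) :
    (2 * d.1 - e.1, 2 * d.2 - e.2) ∉ posQuad := by
  intro hz
  have hdz : (2 * d.1 - e.1, 2 * d.2 - e.2) ≠ d := fun h => by
    rw [Prod.ext_iff] at h; exact hed (Prod.ext (by omega) (by omega))
  have hzS : (2 * d.1 - e.1, 2 * d.2 - e.2) ∈ S \ {e} := by
    refine (he.2.mem_or_mem_of_add_eq (x := d) ⟨hd.1, hed.symm⟩ (hS.subset_posQuad he.1) hz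
      (by dsimp only; omega) (by dsimp only; omega)).resolve_left fun h => h.2 rfl
  exact (hd.2.mem_of_two_mul_le ⟨hzS.1, hdz⟩ ⟨he.1, hed⟩ (hS.subset_posQuad hd.1)
    (by dsimp only; omega) (by dsimp only; omega)).2 rfl

lemma eq_or_eq_of_between (hS : IsTriangularSet S) {cm cp : ℕ × ℕ} (hd : RemovableCell S d)
    (hcm : RemovableCell S cm) (hcp : RemovableCell S cp) (hmd : cm.1 ≤ d.1) (hdp : d.1 ≤ cp.1) :
    d = cm ∨ d = cp := by
  by_contra! hne
  have hdm2 : d.2 < cm.2 := by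
    by_contra! h; exact hcm.not_le hS hd.1 hne.1 ⟨hmd, h⟩
  have hpd2 : cp.2 < d.2 := by
    by_contra! h; exact hd.not_le hS hcp.1 (Ne.symm hne.2) ⟨hdp, h⟩
  have hd1 := (hS.subset_posQuad hd.1).1
  have hd2 := (hS.subset_posQuad hd.1).2
  rcases lt_or_ge cp.1 (2 * d.1) with h | h
  · exact hd.reflect_notMem_posQuad hS hcp (Ne.symm hne.2) h.le (by omega) ⟨by omega, by omega⟩
  rcases lt_or_ge cm.2 (2 * d.2) with h' | h'
  · exact hd.reflect_notMem_posQuad hS hcm (Ne.symm hne.1) (by omega) h'.le ⟨by omega, by omega⟩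
  exact (hd.2.mem_of_two_mul_le ⟨hcm.1, Ne.symm hne.1⟩ ⟨hcp.1, Ne.symm hne.2⟩
    (hS.subset_posQuad hd.1) (by omega) (by omega)).2 rfl

end RemovableCell

lemma IsTriangularSet.exists_strict_linForm {S : Set (ℕ × ℕ)} (hS : IsTriangularSet S) :
    ∃ a b : ℝ, 0 < a ∧ 0 < b ∧ (∀ c ∈ S, linForm a b c < 1) ∧
      ∀ c ∈ posQuad, c ∉ S → 1 < linForm a b c := by
  obtain ⟨a, b, ha, hb, rfl⟩ := isTriangularSet_iff_linForm.1 hS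
  set T := {c | linForm a b c ≤ 2 ∧ 1 < linForm a b c}
  have hT : T.Finite := (finite_linForm_le ha hb 2).subset fun c hc => hc.1
  have hev : ∀ᶠ t in 𝓝[>] (1 : ℝ), t < 2 ∧ ∀ c ∈ T, t < linForm a b c :=
    nhdsWithin_le_nhds <| (eventually_lt_nhds one_lt_two).and <|
      hT.eventually_all.2 fun c hc => eventually_lt_nhds hc.2
  obtain ⟨t, ⟨ht2, htT⟩, ht1 : 1 < t⟩ := (hev.and self_mem_nhdsWithin).exists
  have hscale (c : ℕ × ℕ) : linForm (a / t) (b / t) c = linForm a b c / t := by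
    simp only [linForm]; ring
  have ht0 : 0 < t := by linarith
  refine ⟨a / t, b / t, div_pos ha ht0, div_pos hb ht0, fun c hc => ?_, fun c hc hcS => ?_⟩
  · rw [hscale, div_lt_one ht0]
    exact hc.2.trans_lt ht1
  · have h1 : 1 < linForm a b c := by simpa [hc] using hcS
    rw [hscale, one_lt_div ht0]
    by_cases h2 : linForm a b c ≤ 2
    · exact htT c ⟨h2, h1⟩
    · linarith

lemma eventually_add_mul_le_iff {v t : ℝ} (h : v ≠ t) (k : ℝ) :
    ∀ᶠ ε in 𝓝 (0 : ℝ), (v + ε * k ≤ t ↔ v ≤ t) := by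
  have hlim : Tendsto (fun ε : ℝ => v + ε * k) (𝓝 0) (𝓝 v) :=
    (show Continuous fun ε : ℝ => v + ε * k by fun_prop).tendsto' 0 v (by simp)
  rcases h.lt_or_gt with h | h
  · exact (hlim.eventually_lt_const h).mono fun ε hε => iff_of_true hε.le h.le
  · exact (hlim.eventually_const_lt h).mono fun ε hε => iff_of_false hε.not_ge h.not_ge

lemma eq_of_linForm_eq_of_fst_eq {a b : ℝ} (hb : b ≠ 0) {c d : ℕ × ℕ}
    (h : linForm a b c = linForm a b d) (h1 : c.1 = d.1) : c = d := by
  refine Prod.ext h1 ?_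
  simp only [linForm, h1, add_right_inj, mul_right_inj' hb, Nat.cast_inj] at h
  exact h

/-- Rotating the line `linForm a b = t` slightly about its point with abscissa `d.1 - 1/2`
cuts off exactly the rightmost cell `d` on it. -/
lemma removableCell_of_rightmost {a b t : ℝ} (ha : 0 < a) (hb : 0 < b) {d : ℕ × ℕ}
    (hd : d ∈ posQuad) (hdt : linForm a b d = t)
    (hmax : ∀ c ∈ posQuad, linForm a b c = t → c.1 ≤ d.1) :
    RemovableCell {c ∈ posQuad | linForm a b c ≤ t} d := by
  refine ⟨⟨hd, hdt.le⟩, ?_⟩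
  set X : ℝ := d.1 - 1 / 2 with hXdef
  have hX : 0 < X := by
    have : (1 : ℝ) ≤ d.1 := by exact_mod_cast hd.1
    linarith [hXdef]
  have ht : 0 < t := hdt ▸ linForm_pos ha hb hd
  set T := {c | linForm a b c ≤ 2 * t ∧ linForm a b c ≠ t}
  have hT : T.Finite := (finite_linForm_le ha hb (2 * t)).subset fun c hc => hc.1
  have hsmall : ∀ᶠ ε in 𝓝 (0 : ℝ), ε * X < t :=
    (show Continuous fun ε : ℝ => ε * X by fun_prop).tendsto' 0 0 (zero_mul X)
      |>.eventually_lt_const ht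
  have hsign : ∀ᶠ ε in 𝓝 (0 : ℝ),
      ∀ c ∈ T, (linForm a b c + ε * (c.1 - X) ≤ t ↔ linForm a b c ≤ t) :=
    hT.eventually_all.2 fun c hc => eventually_add_mul_le_iff hc.2 _
  obtain ⟨ε, ⟨hεX, hεT⟩, hε : 0 < ε⟩ :=
    ((hsmall.and hsign).filter_mono (nhdsWithin_le_nhds : 𝓝[>] (0 : ℝ) ≤ 𝓝 0)
      |>.and self_mem_nhdsWithin).exists
  have hcell : ∀ c ∈ posQuad,
      (linForm a b c ≤ t ∧ c ≠ d ↔ linForm a b c + ε * (c.1 - X) ≤ t) := by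
    intro c hc
    by_cases hcd : c = d
    · have : (d.1 : ℝ) - X = 1 / 2 := by rw [hXdef]; ring
      simp only [hcd, hdt, this, ne_eq, not_true_eq_false, and_false, false_iff, not_le]
      linarith
    simp only [hcd, ne_eq, not_false_eq_true, and_true]
    by_cases hct : linForm a b c = t
    · have hc1 : c.1 < d.1 := (hmax c hc hct).lt_of_ne fun h1 =>
        hcd (eq_of_linForm_eq_of_fst_eq hb.ne' (hct.trans hdt.symm) h1)
      have : (c.1 : ℝ) + 1 ≤ d.1 := by exact_mod_cast hc1
      simp only [hct, le_refl, true_iff]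
      nlinarith [hXdef]
    by_cases hc2t : linForm a b c ≤ 2 * t
    · exact (hεT c ⟨hc2t, hct⟩).symm
    · have : (0 : ℝ) ≤ ε * c.1 := by positivity
      constructor <;> intro h <;> nlinarith
  convert isTriangularSet_linForm_le (add_pos ha hε) hb (by positivity : 0 < t + ε * X) using 1
  ext c
  have htilt : linForm (a + ε) b c ≤ t + ε * X ↔ linForm a b c + ε * (c.1 - X) ≤ t := by
    simp only [linForm]; constructor <;> intro h <;> linarith
  rw [Set.mem_sdiff, mem_singleton_iff, mem_ofPred_eq, mem_ofPred_eq, htilt]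
  by_cases hc : c ∈ posQuad
  · simp only [hc, true_and, ← hcell c hc]
  · simp [hc]

/-- Sweeping from a line strictly separating `S` towards one strictly separating `ν`, the first
line that touches a cell of `S` still separates `S` and avoids `ν`; it can only touch `S \ ν`. -/
lemma exists_linForm_touching {S ν : Set (ℕ × ℕ)} (hS : IsTriangularSet S)
    (hν : IsTriangularSet ν) (hsub : ν ⊆ S) (hne : (S \ ν).Nonempty) :
    ∃ a b t : ℝ, 0 < a ∧ 0 < b ∧ S = {c ∈ posQuad | linForm a b c ≤ t} ∧
      (∀ c ∈ ν, linForm a b c < t) ∧ ∃ c ∈ S, linForm a b c = t := by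
  obtain ⟨ag, bg, hag, hbg, hgS, hgO⟩ := hS.exists_strict_linForm
  obtain ⟨af, bf, haf, hbf, hfν, hfO⟩ := hν.exists_strict_linForm
  set g := linForm ag bg
  set f := linForm af bf
  have hgap {c} (hc : c ∈ S \ ν) : g c < 1 ∧ 1 < f c :=
    ⟨hgS c hc.1, hfO c (hS.subset_posQuad hc.1) hc.2⟩
  obtain ⟨c₀, hc₀, hmin⟩ := exists_min_image (S \ ν) (fun c => (1 - g c) / (f c - 1))
    (hS.finite.subset sdiff_subset) hne
  set l := (1 - g c₀) / (f c₀ - 1)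
  have hl : 0 ≤ l := div_nonneg (by linarith [hgap hc₀]) (by linarith [hgap hc₀])
  have hform (c : ℕ × ℕ) : linForm (ag + l * af) (bg + l * bf) c = g c + l * f c := by
    simp only [g, f, linForm]; ring
  refine ⟨ag + l * af, bg + l * bf, 1 + l, by positivity, by positivity, ?_, fun c hc => ?_,
    c₀, hc₀.1, ?_⟩
  · ext c
    simp only [mem_ofPred_eq, hform]
    refine ⟨fun hc => ⟨hS.subset_posQuad hc, ?_⟩, fun ⟨hcq, hc⟩ => ?_⟩
    · by_cases hcν : c ∈ ν
      · nlinarith [hgS c hc, hfν c hcν]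
      · have h := hgap ⟨hc, hcν⟩
        have := (le_div_iff₀ (by linarith)).1 (hmin c ⟨hc, hcν⟩)
        linarith
    · by_contra hcS
      nlinarith [hgO c hcq hcS, hfO c hcq fun h => hcS (hsub h)]
  · rw [hform]; nlinarith [hgS c (hsub hc), hfν c hc]
  · have hl₀ : l * (f c₀ - 1) = 1 - g c₀ := div_mul_cancel₀ _ (by linarith [hgap hc₀])
    rw [hform]; linarith

lemma IsTriangularSet.exists_removableCell_notMem {S ν : Set (ℕ × ℕ)} (hS : IsTriangularSet S)
    (hν : IsTriangularSet ν) (hsub : ν ⊆ S) (hne : (S \ ν).Nonempty) :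
    ∃ d ∈ S \ ν, RemovableCell S d := by
  obtain ⟨a, b, t, ha, hb, rfl, hνt, hcontact⟩ := exists_linForm_touching hS hν hsub hne
  obtain ⟨d, ⟨hdq, hdt⟩, hmax⟩ := exists_max_image {c ∈ posQuad | linForm a b c = t}
    (fun c => c.1) ((finite_linForm_le ha hb t).subset fun c hc => hc.2.le)
    (by obtain ⟨c, hc, hct⟩ := hcontact; exact ⟨c, hc.1, hct⟩)
  exact ⟨d, ⟨⟨hdq, hdt.le⟩, fun hdν => (hνt d hdν).ne hdt⟩,
    removableCell_of_rightmost ha hb hdq hdt fun c hc hct => hmax c ⟨hc, hct⟩⟩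

lemma IsTriangularSet.eq_of_extremal_removable_mem {S ν : Set (ℕ × ℕ)} (hS : IsTriangularSet S)
    {cm cp : ℕ × ℕ} (hcm : RemovableCell S cm ∧ ∀ c, RemovableCell S c → cm.1 ≤ c.1)
    (hcp : RemovableCell S cp ∧ ∀ c, RemovableCell S c → c.1 ≤ cp.1)
    (hν : IsTriangularSet ν) (hsub : ν ⊆ S) (hm : cm ∈ ν) (hp : cp ∈ ν) : ν = S := by
  by_contra hne
  obtain ⟨d, hd, hdrem⟩ := hS.exists_removableCell_notMem hν hsub
    (sdiff_nonempty.2 fun h => hne (hsub.antisymm h))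
  rcases hdrem.eq_or_eq_of_between hS hcm.1 hcp.1 (hcm.2 d hdrem) (hcp.2 d hdrem) with rfl | rfl
  exacts [hd.2 hm, hd.2 hp]

def triSubs (S : Set (ℕ × ℕ)) : Set (Set (ℕ × ℕ)) := {ν | IsTriangularSet ν ∧ ν ⊆ S}

lemma triSubs_mono {S T : Set (ℕ × ℕ)} (h : S ⊆ T) : triSubs S ⊆ triSubs T :=
  fun _ hν => ⟨hν.1, hν.2.trans h⟩

lemma IsTriangularSet.finite_triSubs {S : Set (ℕ × ℕ)} (hS : IsTriangularSet S) :
    (triSubs S).Finite :=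
  hS.finite.finite_subsets.subset fun _ hν => hν.2

lemma triSubs_eq_insert {S : Set (ℕ × ℕ)} (hS : IsTriangularSet S) {cm cp : ℕ × ℕ}
    (hcm : RemovableCell S cm ∧ ∀ c, RemovableCell S c → cm.1 ≤ c.1)
    (hcp : RemovableCell S cp ∧ ∀ c, RemovableCell S c → c.1 ≤ cp.1) :
    triSubs S = insert S (triSubs (S \ {cm}) ∪ triSubs (S \ {cp})) := by
  refine subset_antisymm (fun ν ⟨hν, hsub⟩ => ?_) (insert_subset ⟨hS, subset_rfl⟩
    (union_subset (triSubs_mono sdiff_subset) (triSubs_mono sdiff_subset)))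
  by_cases hm : cm ∈ ν
  · by_cases hp : cp ∈ ν
    · exact Or.inl (hS.eq_of_extremal_removable_mem hcm hcp hν hsub hm hp)
    · exact Or.inr (Or.inr ⟨hν, subset_sdiff_singleton hsub hp⟩)
  · exact Or.inr (Or.inl ⟨hν, subset_sdiff_singleton hsub hm⟩)

lemma triSubs_inter_triSubs {S : Set (ℕ × ℕ)} (hS : S ⊆ posQuad) {cm cp : ℕ × ℕ}
    (hcm : cm ∈ S) (hcp : cp ∈ S) :
    triSubs (S \ {cm}) ∩ triSubs (S \ {cp}) =
      triSubs (S \ {c | c ∈ S ∧ toR2 c ∈ segment ℝ (toR2 cm) (toR2 cp)}) := by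
  ext ν
  refine ⟨fun ⟨⟨hν, hsubm⟩, ⟨_, hsubp⟩⟩ => ⟨hν, fun c hc => ⟨(hsubm hc).1, fun hseg => ?_⟩⟩,
    fun ⟨hν, hsub⟩ => ?_⟩
  · have hmν : cm ∉ ν := fun h => (hsubm h).2 rfl
    have hpν : cp ∉ ν := fun h => (hsubp h).2 rfl
    exact hν.notMem_of_mem_segment ⟨hS hcm, hmν⟩ ⟨hS hcp, hpν⟩ hseg.2 hc
  · have hνS : ν ⊆ S := hsub.trans sdiff_subset
    exact ⟨⟨hν, subset_sdiff_singleton hνS fun h => (hsub h).2 ⟨hcm, left_mem_segment ℝ _ _⟩⟩,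
      ⟨hν, subset_sdiff_singleton hνS fun h => (hsub h).2 ⟨hcp, right_mem_segment ℝ _ _⟩⟩⟩

theorem stmt15_general (S : Set (ℕ × ℕ)) (hS : IsTriangularSet S)
    (cm cp : ℕ × ℕ)
    (hcm : RemovableCell S cm ∧ ∀ c, RemovableCell S c → cm.1 ≤ c.1)
    (hcp : RemovableCell S cp ∧ ∀ c, RemovableCell S c → c.1 ≤ cp.1) :
    (numTriSub S : ℤ) =
      (numTriSub (S \ {cm}) : ℤ) + (numTriSub (S \ {cp}) : ℤ) -
        (numTriSub (S \ {c | c ∈ S ∧ toR2 c ∈ segment ℝ (toR2 cm) (toR2 cp)}) : ℤ) + 1 := by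
  have hfin (c : ℕ × ℕ) : (triSubs (S \ {c})).Finite :=
    hS.finite_triSubs.subset (triSubs_mono sdiff_subset)
  have hSnotMem : S ∉ triSubs (S \ {cm}) ∪ triSubs (S \ {cp}) := by
    rintro (h | h)
    exacts [(h.2 hcm.1.1).2 rfl, (h.2 hcp.1.1).2 rfl]
  have hinsert := ncard_insert_of_notMem hSnotMem ((hfin cm).union (hfin cp))
  have hunion := ncard_union_add_ncard_inter _ _ (hfin cm) (hfin cp)
  rw [← triSubs_eq_insert hS hcm hcp] at hinsert
  rw [triSubs_inter_triSubs hS.subset_posQuad hcm.1.1 hcp.1.1] at hunion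
  change ((triSubs S).ncard : ℤ) = (triSubs _).ncard + (triSubs _).ncard - (triSubs _).ncard + 1
  omega

/-- the recurrence I(τ) = I(τ \ {c⁻}) + I(τ \ {c⁺}) − I(τ°) + 1,
where c⁻, c⁺ are the leftmost and rightmost removable cells of τ, and τ° is τ
minus the cells on the segment between c⁻ and c⁺. -/
theorem stmt15 (S : Set (ℕ × ℕ)) (hS : IsTriangularSet S) (hne : S.Nonempty)
    (cm cp : ℕ × ℕ)
    (hcm : RemovableCell S cm ∧ ∀ c, RemovableCell S c → cm.1 ≤ c.1)
    (hcp : RemovableCell S cp ∧ ∀ c, RemovableCell S c → c.1 ≤ cp.1) :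
    (numTriSub S : ℤ) =
      (numTriSub (S \ {cm}) : ℤ) + (numTriSub (S \ {cp}) : ℤ) -
        (numTriSub (S \ {c | c ∈ S ∧ toR2 c ∈ segment ℝ (toR2 cm) (toR2 cp)}) : ℤ) + 1 :=
  stmt15_general S hS cm cp hcm hcp
end

section
/- For positive integers h, ℓ, a triangular partition ν fits inside an h × ℓ rectangle (height at most h, width at most ℓ) if and only if ν is contained in the triangular partition τ = (τ₁,...,τ_h) with τ_j = ⌊ℓ + 1 − (ℓ(j−1) + 1)/h⌋ for 1 ≤ j ≤ h. -/
/-!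
In the coordinates `(x - 1, y - 1)` of its lower-left corner, a cell of `τ` lies strictly inside
the triangle with vertices `(0, 0)`, `(ℓ, 0)`, `(0, h)`: solving `h x + ℓ y < hℓ + h + ℓ` for `x`
gives the floor in `τ_j`, and the line `h x + ℓ y = hℓ + h + ℓ - 1` shows that `τ` is triangular.
Conversely, if `ν = {x/r + y/s ≤ 1}` contains a cell outside `τ`, the corner of that cell lies
beyond the segment from `(ℓ, 0)` to `(0, h)`. A linear form with nonnegative coefficients is
bounded below there by its value at one of the two endpoints, so `ν` contains `(ℓ + 1, 1)` or
`(1, h + 1)` and does not fit in the `h × ℓ` rectangle.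
-/

open Set

def triangleCells (r s : ℝ) : Set (ℕ × ℕ) :=
  {c | 1 ≤ c.1 ∧ 1 ≤ c.2 ∧ (c.1 : ℝ) / r + (c.2 : ℝ) / s ≤ 1}

def rectTriangle (h ℓ : ℕ) : Set (ℕ × ℕ) :=
  {c | 1 ≤ c.1 ∧ 1 ≤ c.2 ∧ h * c.1 + ℓ * c.2 < h * ℓ + h + ℓ}

lemma le_floor_iff_mul_add_mul_lt (h ℓ x y : ℕ) (hh : 1 ≤ h) :
    (x : ℤ) ≤ ⌊(ℓ : ℝ) + 1 - ((ℓ : ℝ) * ((y : ℝ) - 1) + 1) / (h : ℝ)⌋ ↔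
      h * x + ℓ * y < h * ℓ + h + ℓ := by
  have hpos : (0 : ℝ) < h := by exact_mod_cast hh
  rw [Int.le_floor, Int.cast_natCast, le_sub_comm, div_le_iff₀ hpos, ← Nat.add_one_le_iff,
    ← Nat.cast_le (α := ℝ)]
  push_cast
  constructor <;> intro <;> linarith

lemma rectTriangle_bound_pos {h ℓ : ℕ} (hh : 1 ≤ h) (hℓ : 1 ≤ ℓ) :
    (0 : ℝ) < h * ℓ + h + ℓ - 1 := by
  have : (1 : ℝ) ≤ h := by exact_mod_cast hh
  have : (0 : ℝ) < ℓ := by exact_mod_cast hℓ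
  nlinarith

lemma rectTriangle_eq_triangleCells {h ℓ : ℕ} (hh : 1 ≤ h) (hℓ : 1 ≤ ℓ) :
    rectTriangle h ℓ =
      triangleCells ((h * ℓ + h + ℓ - 1 : ℝ) / h) ((h * ℓ + h + ℓ - 1 : ℝ) / ℓ) := by
  have hpos := rectTriangle_bound_pos hh hℓ
  ext ⟨x, y⟩
  simp only [rectTriangle, triangleCells, mem_ofPred_eq, div_div_eq_mul_div, ← add_div,
    div_le_one hpos, ← Nat.add_one_le_iff, ← Nat.cast_le (α := ℝ)]
  push_cast
  constructor <;> rintro ⟨hx, hy, hle⟩ <;> exact ⟨hx, hy, by linarith⟩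

lemma isTriangularSet_rectTriangle {h ℓ : ℕ} (hh : 1 ≤ h) (hℓ : 1 ≤ ℓ) :
    IsTriangularSet (rectTriangle h ℓ) := by
  have hpos := rectTriangle_bound_pos hh hℓ
  exact ⟨_, _, by positivity, by positivity, rectTriangle_eq_triangleCells hh hℓ⟩

lemma le_and_le_of_mem_rectTriangle {h ℓ : ℕ} {c : ℕ × ℕ} (hc : c ∈ rectTriangle h ℓ) :
    c.1 ≤ ℓ ∧ c.2 ≤ h := by
  obtain ⟨hx, hy, hlt⟩ := hc
  constructor <;> nlinarith

lemma setOf_le_floor_eq_rectTriangle {h ℓ : ℕ} (hh : 1 ≤ h) :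
    {c : ℕ × ℕ | 1 ≤ c.1 ∧ 1 ≤ c.2 ∧ c.2 ≤ h ∧
        (c.1 : ℤ) ≤ ⌊(ℓ : ℝ) + 1 - ((ℓ : ℝ) * ((c.2 : ℝ) - 1) + 1) / (h : ℝ)⌋} =
      rectTriangle h ℓ := by
  ext c
  simp only [mem_ofPred_eq, le_floor_iff_mul_add_mul_lt _ _ _ _ hh]
  refine ⟨fun ⟨hx, hy, _, hlt⟩ => ⟨hx, hy, hlt⟩, fun hc => ?_⟩
  exact ⟨hc.1, hc.2.1, (le_and_le_of_mem_rectTriangle hc).2, hc.2.2⟩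

lemma min_mul_le_mul_add_mul {a b ℓ h u v : ℝ} (ha : 0 ≤ a) (hb : 0 ≤ b) (hℓ : 0 < ℓ)
    (hh : 0 < h) (hu : 0 ≤ u) (hv : 0 ≤ v) (huv : h * ℓ ≤ h * u + ℓ * v) :
    min (a * ℓ) (b * h) ≤ a * u + b * v := by
  have hm : 0 ≤ min (a * ℓ) (b * h) := le_min (by positivity) (by positivity)
  refine le_of_mul_le_mul_left ?_ (mul_pos hh hℓ)
  calc h * ℓ * min (a * ℓ) (b * h)
      ≤ (h * u) * min (a * ℓ) (b * h) + (ℓ * v) * min (a * ℓ) (b * h) := by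
        rw [← add_mul]
        exact mul_le_mul_of_nonneg_right huv hm
    _ ≤ (h * u) * (a * ℓ) + (ℓ * v) * (b * h) := by gcongr <;> simp
    _ = h * ℓ * (a * u + b * v) := by ring

lemma corner_mem_of_not_mem_rectTriangle {r s : ℝ} (hr : 0 < r) (hs : 0 < s) {h ℓ : ℕ}
    (hh : 1 ≤ h) (hℓ : 1 ≤ ℓ) {c : ℕ × ℕ} (hc : c ∈ triangleCells r s)
    (hout : c ∉ rectTriangle h ℓ) :
    (ℓ + 1, 1) ∈ triangleCells r s ∨ (1, h + 1) ∈ triangleCells r s := by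
  obtain ⟨x, y⟩ := c
  obtain ⟨hx, hy, hxy⟩ := hc
  have hge : h * ℓ + h + ℓ ≤ h * x + ℓ * y := not_lt.1 fun hlt => hout ⟨hx, hy, hlt⟩
  have hcorner : (h * ℓ : ℝ) ≤ h * (x - 1) + ℓ * (y - 1) := by
    have := (Nat.cast_le (α := ℝ)).2 hge
    push_cast at this
    linarith
  have key := min_mul_le_mul_add_mul (a := r⁻¹) (b := s⁻¹) (inv_nonneg.2 hr.le)
    (inv_nonneg.2 hs.le) (Nat.cast_pos.2 hℓ) (Nat.cast_pos.2 hh) (by simpa using hx)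
    (by simpa using hy) hcorner
  rcases min_le_iff.1 key with hmin | hmin
  · refine Or.inl ⟨Nat.le_add_left 1 ℓ, le_rfl, ?_⟩
    push_cast
    simp only [div_eq_mul_inv] at hxy ⊢
    linarith
  · refine Or.inr ⟨le_rfl, Nat.le_add_left 1 h, ?_⟩
    push_cast
    simp only [div_eq_mul_inv] at hxy ⊢
    linarith

lemma triangleCells_subset_rectTriangle_iff {r s : ℝ} (hr : 0 < r) (hs : 0 < s) {h ℓ : ℕ}
    (hh : 1 ≤ h) (hℓ : 1 ≤ ℓ) :
    (∀ c ∈ triangleCells r s, c.1 ≤ ℓ ∧ c.2 ≤ h) ↔ triangleCells r s ⊆ rectTriangle h ℓ := by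
  refine ⟨fun hfit c hc => ?_, fun hsub c hc => le_and_le_of_mem_rectTriangle (hsub hc)⟩
  by_contra hout
  rcases corner_mem_of_not_mem_rectTriangle hr hs hh hℓ hc hout with hcorner | hcorner
  · exact Nat.not_succ_le_self ℓ (hfit _ hcorner).1
  · exact Nat.not_succ_le_self h (hfit _ hcorner).2

/-- the set τ with parts τ_j = ⌊ℓ + 1 − (ℓ(j−1) + 1)/h⌋ for
1 ≤ j ≤ h is a triangular partition, and a triangular partition ν fits inside an
h × ℓ rectangle if and only if ν ⊆ τ. -/
theorem stmt16 (h ℓ : ℕ) (hh : 1 ≤ h) (hℓ : 1 ≤ ℓ) :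
    IsTriangularSet {c : ℕ × ℕ | 1 ≤ c.1 ∧ 1 ≤ c.2 ∧ c.2 ≤ h ∧
        (c.1 : ℤ) ≤ ⌊(ℓ : ℝ) + 1 - ((ℓ : ℝ) * ((c.2 : ℝ) - 1) + 1) / (h : ℝ)⌋} ∧
    ∀ ν : Set (ℕ × ℕ), IsTriangularSet ν →
      ((∀ c ∈ ν, c.1 ≤ ℓ ∧ c.2 ≤ h) ↔
        ν ⊆ {c : ℕ × ℕ | 1 ≤ c.1 ∧ 1 ≤ c.2 ∧ c.2 ≤ h ∧
          (c.1 : ℤ) ≤ ⌊(ℓ : ℝ) + 1 - ((ℓ : ℝ) * ((c.2 : ℝ) - 1) + 1) / (h : ℝ)⌋}) := by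
  rw [setOf_le_floor_eq_rectTriangle hh]
  refine ⟨isTriangularSet_rectTriangle hh hℓ, ?_⟩
  rintro ν ⟨r, s, hr, hs, rfl⟩
  exact triangleCells_subset_rectTriangle_iff hr hs hh hℓ
end

section
/- For integers ℓ, d, e with 1 ≤ d < e ≤ ℓ, the number of lattice points (x,y) ∈ ℕ² with x ≥ d+1, y ≥ 1, ex + dy ≤ e + d(ℓ+1), plus the number of lattice points (x,y) ∈ ℕ² with x ≥ e+1, y ≥ 1, (e−d)x + ey < (e−d)(ℓ+1) + e, equals C(ℓ − e + 2, 2). -/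
/-!
Put `m = ℓ - e`. The affine maps `(k, i) ↦ (i + d + 1, m + 1 - k)` and
`(k, i) ↦ (ℓ + 1 - k, k - i + 1)` carry the lattice points `i ≤ k ≤ m` with `e * i ≤ d * k`,
resp. `d * k < e * i`, bijectively onto the two triangles; together these are all
`C(m + 2, 2)` lattice points of the triangle `i ≤ k ≤ m`.
-/

open Finset

def triangleLT (a b ℓ : ℕ) : Set (ℕ × ℕ) :=
  {p | a + 1 ≤ p.1 ∧ 1 ≤ p.2 ∧ b * p.1 + a * p.2 ≤ b + a * (ℓ + 1)}

def triangleGE (a b ℓ : ℕ) : Set (ℕ × ℕ) :=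
  {p | a + 1 ≤ p.1 ∧ 1 ≤ p.2 ∧ b * p.1 + a * p.2 < b * (ℓ + 1) + a}

def latticeTriangle (m : ℕ) : Finset (ℕ × ℕ) :=
  (range (m + 1) ×ˢ range (m + 1)).filter fun q => q.2 ≤ q.1

lemma mem_latticeTriangle {m : ℕ} {q : ℕ × ℕ} :
    q ∈ latticeTriangle m ↔ q.2 ≤ q.1 ∧ q.1 ≤ m := by
  simp only [latticeTriangle, mem_filter, mem_product, mem_range]
  omega

lemma card_latticeTriangle (m : ℕ) : (latticeTriangle m).card = (m + 2).choose 2 := by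
  have hrow : ∀ k ∈ range (m + 1), ((range (m + 1)).filter fun i => i ≤ k).card = k + 1 := by
    intro k hk
    rw [mem_range] at hk
    rw [← Nat.card_Iic k]
    congr 1
    ext i
    simp only [mem_filter, mem_range, mem_Iic]
    omega
  calc (latticeTriangle m).card
      = ∑ k ∈ range (m + 1), ((range (m + 1)).filter fun i => i ≤ k).card := by
        rw [latticeTriangle, card_filter, sum_product]
        simp only [card_filter]
    _ = ∑ k ∈ range (m + 2), k := by rw [sum_congr rfl hrow, sum_range_succ' (fun k => k)]; rfl
    _ = (m + 2).choose 2 := by rw [sum_range_id, Nat.choose_two_right]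

variable {d e : ℕ}

lemma ncard_triangleLT (m : ℕ) (hd : 0 < d) (hde : d ≤ e) :
    (triangleLT d e (e + m)).ncard =
      ((latticeTriangle m).filter fun q => e * q.2 ≤ d * q.1).card := by
  rw [← Set.ncard_coe_finset]
  symm
  refine Set.ncard_congr (fun q _ => (q.2 + d + 1, m + 1 - q.1)) ?_ ?_ ?_
  · rintro ⟨k, i⟩ hq
    simp only [coe_filter, Set.mem_ofPred_eq, mem_latticeTriangle] at hq ⊢
    obtain ⟨⟨-, hkm⟩, hik⟩ := hq
    obtain ⟨r, rfl⟩ := Nat.exists_eq_add_of_le hkm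
    refine ⟨by omega, by omega, ?_⟩
    rw [show k + r + 1 - k = r + 1 by omega]
    nlinarith
  · rintro ⟨k, i⟩ ⟨k', i'⟩ hq hq'
    simp only [coe_filter, Set.mem_ofPred_eq, mem_latticeTriangle, Prod.mk.injEq] at hq hq' ⊢
    omega
  · rintro ⟨x, y⟩ ⟨hx, hy, hxy⟩
    obtain ⟨i, rfl⟩ : ∃ i, x = i + d + 1 := ⟨x - d - 1, by omega⟩
    obtain ⟨j, rfl⟩ : ∃ j, y = j + 1 := ⟨y - 1, by omega⟩
    have hjm : j ≤ m := by
      by_contra! h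
      nlinarith
    obtain ⟨k, rfl⟩ := Nat.exists_eq_add_of_le hjm
    have hik : e * i ≤ d * k := by nlinarith
    have hi : i ≤ k :=
      Nat.le_of_mul_le_mul_left (hik.trans (Nat.mul_le_mul_right k hde)) (hd.trans_le hde)
    refine ⟨(k, i), ?_, ?_⟩
    · simp only [coe_filter, Set.mem_ofPred_eq, mem_latticeTriangle]
      exact ⟨⟨hi, by omega⟩, hik⟩
    · exact Prod.ext rfl (by dsimp only; omega)

lemma ncard_triangleGE (m : ℕ) (hde : d ≤ e) :
    (triangleGE e (e - d) (e + m)).ncard =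
      ((latticeTriangle m).filter fun q => ¬ e * q.2 ≤ d * q.1).card := by
  obtain ⟨c, rfl⟩ := Nat.exists_eq_add_of_le hde
  rw [Nat.add_sub_cancel_left, ← Set.ncard_coe_finset]
  symm
  refine Set.ncard_congr (fun q _ => (d + c + m + 1 - q.1, q.1 - q.2 + 1)) ?_ ?_ ?_
  · rintro ⟨k, i⟩ hq
    simp only [coe_filter, Set.mem_ofPred_eq, mem_latticeTriangle, not_le] at hq ⊢
    obtain ⟨⟨hik, hkm⟩, hlt⟩ := hq
    obtain ⟨r, rfl⟩ := Nat.exists_eq_add_of_le hkm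
    obtain ⟨s, rfl⟩ := Nat.exists_eq_add_of_le hik
    refine ⟨by omega, by omega, ?_⟩
    rw [show d + c + (i + s + r) + 1 - (i + s) = d + c + r + 1 by omega,
      show i + s - i + 1 = s + 1 by omega]
    nlinarith
  · rintro ⟨k, i⟩ ⟨k', i'⟩ hq hq'
    simp only [coe_filter, Set.mem_ofPred_eq, mem_latticeTriangle, Prod.mk.injEq] at hq hq' ⊢
    omega
  · rintro ⟨x, y⟩ ⟨hx, hy, hxy⟩
    obtain ⟨a, rfl⟩ : ∃ a, x = d + c + 1 + a := ⟨x - (d + c + 1), by omega⟩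
    obtain ⟨j, rfl⟩ : ∃ j, y = j + 1 := ⟨y - 1, by omega⟩
    have ham : a < m := by
      by_contra! h
      nlinarith
    obtain ⟨k, rfl⟩ := Nat.exists_eq_add_of_lt ham
    have hjk : (d + c) * j < c * (k + 1) := by nlinarith
    have hj : j ≤ k + 1 := by
      by_contra! h
      nlinarith
    obtain ⟨i, hi⟩ := Nat.exists_eq_add_of_le hj
    refine ⟨(k + 1, i), ?_, ?_⟩
    · simp only [coe_filter, Set.mem_ofPred_eq, mem_latticeTriangle, not_le]
      refine ⟨⟨by omega, by omega⟩, ?_⟩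
      rw [hi] at hjk ⊢
      nlinarith
    · ext <;> dsimp only <;> omega

/-- for 1 ≤ d < e ≤ ℓ, the number of lattice points in the triangle
T^<_{d,e,ℓ} plus the number of lattice points in T^≥_{e,e−d,ℓ} equals
C(ℓ − e + 2, 2). -/
theorem stmt19 (ℓ d e : ℕ) (hd : 1 ≤ d) (hde : d < e) (he : e ≤ ℓ) :
    {p : ℕ × ℕ | d + 1 ≤ p.1 ∧ 1 ≤ p.2 ∧
        e * p.1 + d * p.2 ≤ e + d * (ℓ + 1)}.ncard +
      {p : ℕ × ℕ | e + 1 ≤ p.1 ∧ 1 ≤ p.2 ∧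
        (e - d) * p.1 + e * p.2 < (e - d) * (ℓ + 1) + e}.ncard =
      Nat.choose (ℓ - e + 2) 2 := by
  obtain ⟨m, rfl⟩ := Nat.exists_eq_add_of_le he
  change (triangleLT d e (e + m)).ncard + (triangleGE e (e - d) (e + m)).ncard = _
  rw [ncard_triangleLT m hd hde.le, ncard_triangleGE m hde.le, card_filter_add_card_filter_not,
    card_latticeTriangle, Nat.add_sub_cancel_left]
end
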